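/- arXiv:2603.26678 — 3 statements merged into one kernel-verified Lean document; each statement's English description precedes it below -/
import Mathlib

section
/- Let G(y) = θ·((y/k)^{λ/(α+1)} − 1) − c_f·k·(y/k − 1) with θ>0, c_f>0, k>0, λ>1+α>0, and suppose θ > (α+1)·c_f·k/λ. Then there exists a unique y₂ ∈ (0,k) such that G(y₂)=0, and G(y)<0 for y∈(y₂,k) while G(y)>0 for y∈(0,y₂). -/
/-!
`G` is strictly convex on `[0, k]` (as `λ / (α + 1) > 1`), positive at `0` (as `θ < c_f k`),
zero at `k`, and has positive derivative `(θ λ / (α + 1) - c_f k) / k` at `k`, so it is negative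
just left of `k`. The intermediate value theorem gives a zero `y₂`, and since a strictly convex
function lies strictly below its chords, `G > 0` on `(0, y₂)` and `G < 0` on `(y₂, k)`.
-/

open Set Filter Topology

theorem exists_lt_of_hasDerivAt_pos {f : ℝ → ℝ} {f' a x : ℝ} (hf : HasDerivAt f f' x)
    (hf' : 0 < f') (ha : a < x) : ∃ t ∈ Ioo a x, f t < f x := by
  have hslope : ∀ᶠ t in 𝓝[<] x, 0 < slope f x t :=
    ((hasDerivAt_iff_tendsto_slope.1 hf).mono_left (nhdsLT_le_nhdsNE x)).eventually
      (eventually_gt_nhds hf')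
  obtain ⟨t, ht, hpos⟩ :=
    ((show ∀ᶠ t in 𝓝[<] x, t ∈ Ioo a x from Ioo_mem_nhdsLT ha).and hslope).exists
  refine ⟨t, ht, ?_⟩
  rw [slope_def_field] at hpos
  exact sub_neg.1 ((div_pos_iff.1 hpos).resolve_left fun h => h.2.not_gt (sub_neg.2 ht.2)).1

theorem StrictConvexOn.exists_unique_zero_of_pos_of_neg {f : ℝ → ℝ} {a b t₀ : ℝ}
    (hf : StrictConvexOn ℝ (Icc a b) f) (hfc : ContinuousOn f (Icc a b)) (ha : 0 < f a)
    (hb : f b = 0) (ht₀ : t₀ ∈ Ioo a b) (hft₀ : f t₀ < 0) :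
    ∃ c ∈ Ioo a b, f c = 0 ∧ (∀ t ∈ Ioo a c, 0 < f t) ∧ (∀ t ∈ Ioo c b, f t < 0) ∧
      ∀ t ∈ Ioo a b, f t = 0 → t = c := by
  obtain ⟨c, hc, hfc0⟩ := intermediate_value_Ioo' ht₀.1.le (hfc.mono (Icc_subset_Icc_right
    ht₀.2.le)) ⟨hft₀, ha⟩
  have hcb : c < b := hc.2.trans ht₀.2
  have hpos : ∀ t ∈ Ioo a c, 0 < f t := by
    intro t ht
    by_contra! hle
    have := hf.lt_on_openSegment ⟨ht.1.le, (ht.2.trans hcb).le⟩ ⟨(hc.1.trans hcb).le, le_rfl⟩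
      (ht.2.trans hcb).ne (by rw [openSegment_eq_Ioo (ht.2.trans hcb)]; exact ⟨ht.2, hcb⟩)
    rw [hfc0, hb, max_eq_right hle] at this
    exact this.false
  have hneg : ∀ t ∈ Ioo c b, f t < 0 := by
    intro t ht
    have := hf.lt_on_openSegment ⟨hc.1.le, hcb.le⟩ ⟨(hc.1.trans hcb).le, le_rfl⟩ hcb.ne
      (by rwa [openSegment_eq_Ioo hcb])
    rwa [hfc0, hb, max_self] at this
  refine ⟨c, ⟨hc.1, hcb⟩, hfc0, hpos, hneg, fun t ht ht0 => ?_⟩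
  rcases lt_trichotomy t c with htc | htc | htc
  · exact absurd ht0 (hpos t ⟨ht.1, htc⟩).ne'
  · exact htc
  · exact absurd ht0 (hneg t ⟨htc, ht.2⟩).ne

theorem strictConvexOn_rpow_div_sub_linear {θ k p : ℝ} (C : ℝ) (hθ : 0 < θ) (hk : 0 < k)
    (hp : 1 < p) :
    StrictConvexOn ℝ (Ici 0) fun y => θ * ((y / k) ^ p - 1) - C * (y / k - 1) := by
  refine ⟨convex_Ici 0, fun x hx y hy hxy a b ha hb hab => ?_⟩
  have h := (strictConvexOn_rpow hp).2 (div_nonneg hx hk.le) (div_nonneg hy hk.le)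
    (by rwa [Ne, div_left_inj' hk.ne']) ha hb hab
  simp only [smul_eq_mul] at h ⊢
  have hmid : (a * x + b * y) / k = a * (x / k) + b * (y / k) := by ring
  rw [hmid]
  linear_combination θ * h + (θ - C) * hab

theorem hasDerivAt_rpow_div_sub_linear (θ C p : ℝ) {k : ℝ} (hk : k ≠ 0) :
    HasDerivAt (fun y => θ * ((y / k) ^ p - 1) - C * (y / k - 1)) ((θ * p - C) / k) k := by
  have hdiv := (hasDerivAt_id' k).div_const k
  refine ((((hdiv.rpow_const (p := p) (Or.inl (by simp [hk]))).sub_const 1).const_mul θ).sub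
    ((hdiv.sub_const 1).const_mul C)).congr_deriv ?_
  simp only [div_self hk, Real.one_rpow]
  ring

theorem stmt_8_general (θ k α lam cf : ℝ) (hθ : 0 < θ) (hk : 0 < k)
    (hα : 0 < 1 + α) (hlam : 1 + α < lam)
    (hθ1 : (α + 1) * cf * k / lam < θ) (hθ2 : θ < cf * k) :
    let G : ℝ → ℝ := fun y => θ * ((y / k) ^ (lam / (α + 1)) - 1) - cf * k * (y / k - 1)
    ∃ y₂ ∈ Set.Ioo (0:ℝ) k,
      G y₂ = 0 ∧
      (∀ y ∈ Set.Ioo (0:ℝ) y₂, 0 < G y) ∧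
      (∀ y ∈ Set.Ioo y₂ k, G y < 0) ∧
      (∀ y ∈ Set.Ioo (0:ℝ) k, G y = 0 → y = y₂) := by
  intro G
  have hp : 1 < lam / (α + 1) := (one_lt_div (by linarith)).2 (by linarith)
  have hp0 : 0 < lam / (α + 1) := zero_lt_one.trans hp
  have hslope : 0 < (θ * (lam / (α + 1)) - cf * k) / k := by
    rw [div_lt_iff₀ (by linarith)] at hθ1
    refine div_pos (sub_pos.2 ?_) hk
    rw [mul_div_assoc', lt_div_iff₀ (by linarith)]
    linarith
  have hconv : StrictConvexOn ℝ (Icc 0 k) G :=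
    (strictConvexOn_rpow_div_sub_linear _ hθ hk hp).subset Icc_subset_Ici_self (convex_Icc 0 k)
  have hcont : ContinuousOn G (Icc 0 k) :=
    (by fun_prop (disch := exact hp0.le) : Continuous G).continuousOn
  have hG0 : 0 < G 0 := by
    simp only [G, zero_div, Real.zero_rpow hp0.ne', zero_sub]
    linarith
  have hGk : G k = 0 := by simp [G, div_self hk.ne']
  obtain ⟨t₀, ht₀, hGt₀⟩ :=
    exists_lt_of_hasDerivAt_pos (hasDerivAt_rpow_div_sub_linear θ (cf * k) _ hk.ne') hslope hk
  exact hconv.exists_unique_zero_of_pos_of_neg hcont hG0 hGk ht₀ (hGk ▸ hGt₀)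

/-- With θ > (α+1)c_fk/λ and θ < c_fk, G has a unique zero y₂∈(0,k),
with G>0 on (0,y₂) and G<0 on (y₂,k). -/
theorem stmt_8 (θ k α lam cf : ℝ) (hθ : 0 < θ) (hk : 0 < k) (hcf : 0 < cf)
    (hα : 0 < 1 + α) (hlam : 1 + α < lam)
    (hθ1 : (α + 1) * cf * k / lam < θ) (hθ2 : θ < cf * k) :
    let G : ℝ → ℝ := fun y => θ * ((y / k) ^ (lam / (α + 1)) - 1) - cf * k * (y / k - 1)
    ∃ y₂ ∈ Set.Ioo (0:ℝ) k,
      G y₂ = 0 ∧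
      (∀ y ∈ Set.Ioo (0:ℝ) y₂, 0 < G y) ∧
      (∀ y ∈ Set.Ioo y₂ k, G y < 0) ∧
      (∀ y ∈ Set.Ioo (0:ℝ) k, G y = 0 → y = y₂) :=
  stmt_8_general θ k α lam cf hθ hk hα hlam hθ1 hθ2
end

section
/- In the resource-led case (0<λ≤1, λ<1+α), for any y∈[0,k], the maximizer over x∈[0,1] of the piecewise profit Π(x,y) is: min{f(c_f),1} if y < k·f(c_f)^{1+α}; (y/k)^{1/(1+α)} if k·f(c_f)^{1+α} ≤ y < k·f(c_r)^{1+α}; and min{f(c_r),1} if y ≥ k·f(c_r)^{1+α}, where f(c)=(θλ/((α+1)ck))^{1/(1+α−λ)}. -/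
/-!
Write `Π(x, y) = min (π_{c_r} x) (π_{c_f} x + (c_f - c_r) y)`: the two arguments differ by
`(c_f - c_r) (k x^{1+α} - y)`, so the first is the smaller one exactly up to the crossing point
`s = (y/k)^{1/(1+α)}`. Both are unimodal on `[0, ∞)`, with peaks `f(c_f) ≤ f(c_r)`, so the
maximiser of their minimum over `[0, 1]` is the peak of the active branch (cut at `1`) when `s`
lies outside `[f(c_f), f(c_r)]`, and the crossing point itself when it lies inside.
-/

open Real Set

section Unimodal

variable {α β : Type*} [LinearOrder α]

theorem isMaxOn_min_peak [Preorder β] {u : α → β} {a b p : α}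
    (hmono : MonotoneOn u (Icc a p)) (hanti : AntitoneOn u (Ici p)) :
    IsMaxOn u (Icc a b) (min p b) := by
  refine isMaxOn_iff.2 fun x hx => ?_
  rcases le_total x p with hxp | hpx
  · have hxm : x ≤ min p b := le_min hxp hx.2
    exact hmono ⟨hx.1, hxp⟩ ⟨hx.1.trans hxm, min_le_left _ _⟩ hxm
  · rw [min_eq_left (hpx.trans hx.2)]
    exact hanti le_rfl hpx hpx

variable [LinearOrder β] {g h : α → β} {a b s pg ph : α}

theorem isMaxOn_min_of_peak_le (hmono : MonotoneOn g (Icc a pg)) (hanti : AntitoneOn g (Ici pg))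
    (hgh : ∀ x, a ≤ x → x ≤ s → g x ≤ h x) (hapg : a ≤ pg) (hpgs : pg ≤ s) :
    IsMaxOn (fun x => min (g x) (h x)) (Icc a b) (min pg b) := by
  refine isMaxOn_iff.2 fun x hx => ?_
  have ham : a ≤ min pg b := le_min hapg (hx.1.trans hx.2)
  calc min (g x) (h x) ≤ g x := min_le_left _ _
    _ ≤ g (min pg b) := isMaxOn_iff.1 (isMaxOn_min_peak hmono hanti) x hx
    _ = min (g (min pg b)) (h (min pg b)) :=
      (min_eq_left (hgh _ ham ((min_le_left _ _).trans hpgs))).symm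

theorem isMaxOn_min_of_le_crossing_le (hmono : MonotoneOn g (Icc a pg))
    (hanti : AntitoneOn h (Ici ph)) (hgh : ∀ x, a ≤ x → x ≤ s → g x ≤ h x)
    (hhg : ∀ x, a ≤ x → s ≤ x → h x ≤ g x) (has : a ≤ s) (hphs : ph ≤ s) (hspg : s ≤ pg) :
    IsMaxOn (fun x => min (g x) (h x)) (Ici a) s := by
  refine isMaxOn_iff.2 fun x (hx : a ≤ x) => ?_
  rcases le_total x s with hxs | hsx
  · calc min (g x) (h x) ≤ g x := min_le_left _ _
      _ ≤ g s := hmono ⟨hx, hxs.trans hspg⟩ ⟨has, hspg⟩ hxs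
      _ = min (g s) (h s) := (min_eq_left (hgh s has le_rfl)).symm
  · calc min (g x) (h x) ≤ h x := min_le_right _ _
      _ ≤ h s := hanti hphs (hphs.trans hsx) hsx
      _ = min (g s) (h s) := (min_eq_right (hhg s has le_rfl)).symm

theorem isMaxOn_min_of_crossing_lt_peak (hg_mono : MonotoneOn g (Icc a pg))
    (hg_anti : AntitoneOn g (Ici pg)) (hh_mono : MonotoneOn h (Icc a ph))
    (hh_anti : AntitoneOn h (Ici ph)) (hgh : ∀ x, a ≤ x → x ≤ s → g x ≤ h x)
    (hhg : ∀ x, a ≤ x → s ≤ x → h x ≤ g x) (haph : a ≤ ph) (hphg : ph ≤ pg) (hsph : s < ph) :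
    IsMaxOn (fun x => min (g x) (h x)) (Icc a b) (min ph b) := by
  refine isMaxOn_iff.2 fun x hx => ?_
  have hab : a ≤ b := hx.1.trans hx.2
  rcases le_total (min ph b) s with hms | hsm
  · -- the cut at `b` is active, and `b` also cuts the larger peak `pg`
    have hbph : b < ph := (min_lt_iff.1 (hms.trans_lt hsph)).resolve_left (lt_irrefl _)
    have hmb : min ph b = b := min_eq_right hbph.le
    rw [hmb] at hms ⊢
    calc min (g x) (h x) ≤ g x := min_le_left _ _
      _ ≤ g (min pg b) := isMaxOn_iff.1 (isMaxOn_min_peak hg_mono hg_anti) x hx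
      _ = min (g b) (h b) := by rw [min_eq_right (hbph.le.trans hphg), min_eq_left (hgh b hab hms)]
  · calc min (g x) (h x) ≤ h x := min_le_right _ _
      _ ≤ h (min ph b) := isMaxOn_iff.1 (isMaxOn_min_peak hh_mono hh_anti) x hx
      _ = min (g (min ph b)) (h (min ph b)) :=
        (min_eq_right (hhg _ (le_min haph hab) hsm)).symm

end Unimodal

section PureProfit

variable (θ k lam α : ℝ)

noncomputable def pureProfit (c x : ℝ) : ℝ := θ * x ^ lam - c * k * x ^ (1 + α)

-- the stationary point of `pureProfit c`, where `θ λ x^(λ-1) = (1+α) c k x^α`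
noncomputable def profitPeak (c : ℝ) : ℝ := (θ * lam / ((α + 1) * c * k)) ^ (1 / (1 + α - lam))

variable {θ k lam α}

theorem continuous_pureProfit (c : ℝ) (hlam : 0 ≤ lam) (hα : 0 ≤ 1 + α) :
    Continuous (pureProfit θ k lam α c) :=
  (continuous_const.mul (continuous_rpow_const hlam)).sub
    (continuous_const.mul (continuous_rpow_const hα))

theorem hasDerivAt_pureProfit (c : ℝ) {x : ℝ} (hx : 0 < x) :
    HasDerivAt (pureProfit θ k lam α c)
      (x ^ (lam - 1) * (θ * lam - (α + 1) * c * k * x ^ (1 + α - lam))) x := by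
  have hsplit : x ^ (1 + α - 1) = x ^ (lam - 1) * x ^ (1 + α - lam) := by
    rw [← rpow_add hx]; ring_nf
  refine (((hasDerivAt_rpow_const (Or.inl hx.ne')).const_mul θ).sub
    ((hasDerivAt_rpow_const (Or.inl hx.ne')).const_mul (c * k))).congr_deriv ?_
  rw [hsplit]; ring

theorem le_profitPeak_iff {c x : ℝ} (hθ : 0 < θ) (hk : 0 < k) (hlam0 : 0 < lam)
    (hlam : lam < 1 + α) (hc : 0 < c) (hx : 0 ≤ x) :
    x ≤ profitPeak θ k lam α c ↔ (α + 1) * c * k * x ^ (1 + α - lam) ≤ θ * lam := by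
  have hB : 0 < (α + 1) * c * k := by
    have : 0 < α + 1 := by linarith
    positivity
  rw [profitPeak, one_div, le_rpow_inv_iff_of_pos hx (by positivity) (by linarith),
    le_div_iff₀ hB, mul_comm]

theorem profitPeak_pos {c : ℝ} (hθ : 0 < θ) (hk : 0 < k) (hlam0 : 0 < lam) (hlam : lam < 1 + α)
    (hc : 0 < c) : 0 < profitPeak θ k lam α c := by
  have : 0 < α + 1 := by linarith
  exact rpow_pos_of_pos (by positivity) _

theorem profitPeak_le_profitPeak_of_le {c c' : ℝ} (hθ : 0 < θ) (hk : 0 < k) (hlam0 : 0 < lam)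
    (hlam : lam < 1 + α) (hc : 0 < c) (hcc' : c ≤ c') :
    profitPeak θ k lam α c' ≤ profitPeak θ k lam α c := by
  have hα : 0 < α + 1 := by linarith
  have he : 0 < 1 + α - lam := by linarith
  have hc' : 0 < c' := hc.trans_le hcc'
  refine rpow_le_rpow (by positivity) ?_ (by positivity)
  gcongr

theorem monotoneOn_pureProfit {c : ℝ} (hθ : 0 < θ) (hk : 0 < k) (hlam0 : 0 < lam)
    (hlam : lam < 1 + α) (hc : 0 < c) :
    MonotoneOn (pureProfit θ k lam α c) (Icc 0 (profitPeak θ k lam α c)) := by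
  refine monotoneOn_of_deriv_nonneg (convex_Icc _ _)
    (continuous_pureProfit c hlam0.le (hlam0.trans hlam).le).continuousOn ?_ ?_ <;> rw [interior_Icc]
  · exact fun x hx => (hasDerivAt_pureProfit c hx.1).differentiableAt.differentiableWithinAt
  · intro x hx
    rw [(hasDerivAt_pureProfit c hx.1).deriv]
    have hslope := (le_profitPeak_iff hθ hk hlam0 hlam hc hx.1.le).1 hx.2.le
    exact mul_nonneg (rpow_nonneg hx.1.le _) (sub_nonneg.2 hslope)

theorem antitoneOn_pureProfit {c : ℝ} (hθ : 0 < θ) (hk : 0 < k) (hlam0 : 0 < lam)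
    (hlam : lam < 1 + α) (hc : 0 < c) :
    AntitoneOn (pureProfit θ k lam α c) (Ici (profitPeak θ k lam α c)) := by
  have hpeak := profitPeak_pos hθ hk hlam0 hlam hc
  refine antitoneOn_of_deriv_nonpos (convex_Ici _)
    (continuous_pureProfit c hlam0.le (hlam0.trans hlam).le).continuousOn ?_ ?_ <;> rw [interior_Ici]
  · exact fun x hx =>
      (hasDerivAt_pureProfit c (hpeak.trans hx)).differentiableAt.differentiableWithinAt
  · intro x hx
    have hx0 : 0 < x := hpeak.trans hx
    rw [(hasDerivAt_pureProfit c hx0).deriv]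
    have hslope := not_le.1 ((le_profitPeak_iff hθ hk hlam0 hlam hc hx0.le).not.1 (not_le.2 hx))
    exact mul_nonpos_of_nonneg_of_nonpos (rpow_nonneg hx0.le _) (sub_nonpos.2 hslope.le)

theorem pureProfit_le_add_of_le {cr cf x y : ℝ} (hc : cr ≤ cf) (hxy : k * x ^ (1 + α) ≤ y) :
    pureProfit θ k lam α cr x ≤ pureProfit θ k lam α cf x + (cf - cr) * y := by
  unfold pureProfit
  nlinarith [mul_nonneg (sub_nonneg.2 hc) (sub_nonneg.2 hxy)]

theorem add_le_pureProfit_of_le {cr cf x y : ℝ} (hc : cr ≤ cf) (hxy : y ≤ k * x ^ (1 + α)) :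
    pureProfit θ k lam α cf x + (cf - cr) * y ≤ pureProfit θ k lam α cr x := by
  unfold pureProfit
  nlinarith [mul_nonneg (sub_nonneg.2 hc) (sub_nonneg.2 hxy)]

end PureProfit

theorem sub_blendedCost_eq_min {a k X y cr cf : ℝ} (hK : 0 ≤ k * X) (hy : 0 ≤ y) (hc : cr ≤ cf) :
    a - (min (y / (k * X)) 1 * cr + (1 - min (y / (k * X)) 1) * cf) * k * X
      = min (a - cr * k * X) (a - cf * k * X + (cf - cr) * y) := by
  have hshare : min (y / (k * X)) 1 * (k * X) = min y (k * X) := by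
    rcases hK.eq_or_lt with h0 | hpos
    · simp [← h0, hy]
    · rw [min_mul_of_nonneg _ _ hpos.le, div_mul_cancel₀ _ hpos.ne', one_mul]
  calc _ = a - cf * k * X + (cf - cr) * (min (y / (k * X)) 1 * (k * X)) := by ring
    _ = _ := by
      rw [hshare, mul_min_of_nonneg _ _ (sub_nonneg.2 hc), ← min_add_add_left, min_comm]
      congr 1; ring

theorem le_rpow_one_div_iff {k q x y : ℝ} (hk : 0 < k) (hy : 0 ≤ y) (hq : 0 < q) (hx : 0 ≤ x) :
    x ≤ (y / k) ^ (1 / q) ↔ k * x ^ q ≤ y := by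
  rw [one_div, le_rpow_inv_iff_of_pos hx (by positivity) hq, le_div_iff₀ hk, mul_comm]

theorem rpow_one_div_le_iff {k q x y : ℝ} (hk : 0 < k) (hy : 0 ≤ y) (hq : 0 < q) (hx : 0 ≤ x) :
    (y / k) ^ (1 / q) ≤ x ↔ y ≤ k * x ^ q := by
  rw [one_div, rpow_inv_le_iff_of_pos (by positivity) hx hq, div_le_iff₀ hk, mul_comm]


theorem stmt_10_general (θ k α lam cr cf : ℝ) (hθ : 0 < θ) (hk : 0 < k)
    (hlam0 : 0 < lam) (hlam : lam < 1 + α)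
    (hcr : 0 < cr) (hcc : cr < cf) :
    let β : ℝ → ℝ → ℝ := fun x y => min (y / (k * x ^ (1 + α))) 1
    let Prof : ℝ → ℝ → ℝ := fun x y =>
      θ * x ^ lam - (β x y * cr + (1 - β x y) * cf) * k * x ^ (1 + α)
    let f : ℝ → ℝ := fun c => (θ * lam / ((α + 1) * c * k)) ^ (1 / (1 + α - lam))
    ∀ y ∈ Set.Icc (0:ℝ) k,
      (y < k * f cf ^ (1 + α) →
        ∀ x ∈ Set.Icc (0:ℝ) 1, Prof x y ≤ Prof (min (f cf) 1) y) ∧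
      (k * f cf ^ (1 + α) ≤ y → y < k * f cr ^ (1 + α) →
        ∀ x ∈ Set.Icc (0:ℝ) 1, Prof x y ≤ Prof ((y / k) ^ (1 / (1 + α))) y) ∧
      (k * f cr ^ (1 + α) ≤ y →
        ∀ x ∈ Set.Icc (0:ℝ) 1, Prof x y ≤ Prof (min (f cr) 1) y) := by
  intro β Prof f y hy
  have hcf : 0 < cf := hcr.trans hcc
  set s := (y / k) ^ (1 / (1 + α))
  have hs : 0 ≤ s := rpow_nonneg (div_nonneg hy.1 hk.le) _
  have hle_s (x : ℝ) (hx : 0 ≤ x) : x ≤ s ↔ k * x ^ (1 + α) ≤ y :=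
    le_rpow_one_div_iff hk hy.1 (hlam0.trans hlam) hx
  have hs_le (x : ℝ) (hx : 0 ≤ x) : s ≤ x ↔ y ≤ k * x ^ (1 + α) :=
    rpow_one_div_le_iff hk hy.1 (hlam0.trans hlam) hx
  let g := pureProfit θ k lam α cr
  let h := fun x => pureProfit θ k lam α cf x + (cf - cr) * y
  have hProf (x : ℝ) (hx : 0 ≤ x) : Prof x y = min (g x) (h x) :=
    sub_blendedCost_eq_min (mul_nonneg hk.le (rpow_nonneg hx _)) hy.1 hcc.le
  have hmax {m : ℝ} (hm : 0 ≤ m) (H : IsMaxOn (fun x => min (g x) (h x)) (Icc 0 1) m)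
      (x : ℝ) (hx : x ∈ Icc (0 : ℝ) 1) : Prof x y ≤ Prof m y := by
    rw [hProf x hx.1, hProf m hm]
    exact isMaxOn_iff.1 H x hx
  have hgh (x : ℝ) (hx : 0 ≤ x) (hxs : x ≤ s) : g x ≤ h x :=
    pureProfit_le_add_of_le hcc.le ((hle_s x hx).1 hxs)
  have hhg (x : ℝ) (hx : 0 ≤ x) (hsx : s ≤ x) : h x ≤ g x :=
    add_le_pureProfit_of_le hcc.le ((hs_le x hx).1 hsx)
  have hpr := profitPeak_pos hθ hk hlam0 hlam hcr
  have hpf := profitPeak_pos hθ hk hlam0 hlam hcf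
  have hg_mono := monotoneOn_pureProfit hθ hk hlam0 hlam hcr
  have hg_anti := antitoneOn_pureProfit hθ hk hlam0 hlam hcr
  have hh_mono := (monotoneOn_pureProfit hθ hk hlam0 hlam hcf).add_const ((cf - cr) * y)
  have hh_anti := (antitoneOn_pureProfit hθ hk hlam0 hlam hcf).add_const ((cf - cr) * y)
  refine ⟨fun hy_lt => hmax (le_min hpf.le zero_le_one) ?_,
    fun hy_ge hy_lt => hmax hs ?_, fun hy_ge => hmax (le_min hpr.le zero_le_one) ?_⟩
  · exact isMaxOn_min_of_crossing_lt_peak hg_mono hg_anti hh_mono hh_anti hgh hhg hpf.le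
      (profitPeak_le_profitPeak_of_le hθ hk hlam0 hlam hcr hcc.le)
      ((lt_iff_lt_of_le_iff_le (hle_s _ hpf.le)).2 hy_lt)
  · exact (isMaxOn_min_of_le_crossing_le hg_mono hh_anti hgh hhg hs ((hle_s _ hpf.le).2 hy_ge)
      ((lt_iff_lt_of_le_iff_le (hle_s _ hpr.le)).2 hy_lt).le).on_subset Icc_subset_Ici_self
  · exact isMaxOn_min_of_peak_le hg_mono hg_anti hgh hpr.le ((hle_s _ hpr.le).2 hy_ge)

/-- Lemma 2, resource-led case 0<λ≤1<1+α: best response to any y∈[0,k]. -/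
theorem stmt_10 (θ k α lam cr cf : ℝ) (hθ : 0 < θ) (hk : 0 < k)
    (hα : 0 ≤ α) (hlam0 : 0 < lam) (hlam1 : lam ≤ 1) (hlam : lam < 1 + α)
    (hcr : 0 < cr) (hcc : cr < cf) :
    let β : ℝ → ℝ → ℝ := fun x y => min (y / (k * x ^ (1 + α))) 1
    let Prof : ℝ → ℝ → ℝ := fun x y =>
      θ * x ^ lam - (β x y * cr + (1 - β x y) * cf) * k * x ^ (1 + α)
    let f : ℝ → ℝ := fun c => (θ * lam / ((α + 1) * c * k)) ^ (1 / (1 + α - lam))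
    ∀ y ∈ Set.Icc (0:ℝ) k,
      (y < k * f cf ^ (1 + α) →
        ∀ x ∈ Set.Icc (0:ℝ) 1, Prof x y ≤ Prof (min (f cf) 1) y) ∧
      (k * f cf ^ (1 + α) ≤ y → y < k * f cr ^ (1 + α) →
        ∀ x ∈ Set.Icc (0:ℝ) 1, Prof x y ≤ Prof ((y / k) ^ (1 / (1 + α))) y) ∧
      (k * f cr ^ (1 + α) ≤ y →
        ∀ x ∈ Set.Icc (0:ℝ) 1, Prof x y ≤ Prof (min (f cr) 1) y) :=
  stmt_10_general θ k α lam cr cf hθ hk hlam0 hlam hcr hcc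
end

section
/- In the duopoly pricing subgame with capabilities x₁ > x₂ > 0 and uniform willingness-to-pay on [0, θ̃], the unique Nash equilibrium prices are p₁* = 2θ̃·x₁^λ(x₁^λ − x₂^λ)/(4x₁^λ − x₂^λ) and p₂* = θ̃·x₂^λ(x₁^λ − x₂^λ)/(4x₁^λ − x₂^λ); i.e., these prices simultaneously satisfy the first-order conditions ∂Π₁/∂p₁ = 0 and ∂Π₂/∂p₂ = 0, where Π₁ = p₁(θ̃ − (p₁−p₂)/(x₁^λ−x₂^λ))/θ̃ − C₁ and Π₂ = p₂((p₁−p₂)/(x₁^λ−x₂^λ) − p₂x₂^{−λ})/θ̃ − C₂, with C₁, C₂ constants. -/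
/-!
Both profits are quadratic in the firm's own price, so each first-order condition is linear in
`(p₁, p₂)`. Writing `a = x₁ ^ λ`, `b = x₂ ^ λ`, they read `2 p₁ - p₂ = θ̃ (a - b)` and
`b p₁ = 2 a p₂`, a linear system with determinant `4a - b > 0`; its unique solution is `(p₁*, p₂*)`.
-/

namespace Duopoly

theorem hasDerivAt_highProfit (θ d q C t : ℝ) :
    HasDerivAt (fun p => p * (θ - (p - q) / d) / θ - C) ((θ - (2 * t - q) / d) / θ) t := by
  have h := ((((hasDerivAt_id' t).sub_const q).div_const d).const_sub θ)
  exact ((((hasDerivAt_id' t).mul h).div_const θ).sub_const C).congr_deriv (by ring)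

theorem hasDerivAt_lowProfit (θ d e q C t : ℝ) :
    HasDerivAt (fun p => p * ((q - p) / d - p * e) / θ - C)
      (((q - 2 * t) / d - 2 * t * e) / θ) t := by
  have h := (((hasDerivAt_id' t).const_sub q).div_const d).sub ((hasDerivAt_id' t).mul_const e)
  exact ((((hasDerivAt_id' t).mul h).div_const θ).sub_const C).congr_deriv
    (by simp only [Pi.sub_apply]; ring)

theorem highFOC_iff {θ d q₁ q₂ : ℝ} (hθ : θ ≠ 0) (hd : d ≠ 0) :
    (θ - (2 * q₁ - q₂) / d) / θ = 0 ↔ 2 * q₁ - q₂ = θ * d := by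
  rw [div_eq_zero_iff, or_iff_left hθ, sub_eq_zero, eq_div_iff hd, eq_comm]

theorem lowFOC_iff {θ a b q₁ q₂ : ℝ} (hθ : θ ≠ 0) (hb : b ≠ 0) (hab : a - b ≠ 0) :
    ((q₁ - 2 * q₂) / (a - b) - 2 * q₂ * b⁻¹) / θ = 0 ↔ b * q₁ = 2 * a * q₂ := by
  rw [div_eq_zero_iff, or_iff_left hθ]
  field_simp
  constructor <;> intro h <;> linarith

theorem linearSystem_iff {θ a b q₁ q₂ : ℝ} (hdet : 4 * a - b ≠ 0) :
    (2 * q₁ - q₂ = θ * (a - b) ∧ b * q₁ = 2 * a * q₂) ↔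
      q₁ = 2 * θ * a * (a - b) / (4 * a - b) ∧ q₂ = θ * b * (a - b) / (4 * a - b) := by
  simp only [eq_div_iff hdet]
  constructor
  · rintro ⟨h₁, h₂⟩
    exact ⟨by linear_combination 2 * a * h₁ - h₂, by linear_combination b * h₁ - 2 * h₂⟩
  · rintro ⟨h₁, h₂⟩
    exact ⟨mul_right_cancel₀ hdet (by linear_combination 2 * h₁ - h₂),
      mul_right_cancel₀ hdet (by linear_combination b * h₁ - 2 * a * h₂)⟩

end Duopoly

open Duopoly in
theorem stmt_14_general (θt x₁ x₂ lam C₁ C₂ : ℝ) (hθ : 0 < θt) (hlam : 0 < lam)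
    (hx₂ : 0 < x₂) (hx : x₂ < x₁) :
    let Prof₁ : ℝ → ℝ → ℝ := fun p₁ p₂ =>
      p₁ * (θt - (p₁ - p₂) / (x₁ ^ lam - x₂ ^ lam)) / θt - C₁
    let Prof₂ : ℝ → ℝ → ℝ := fun p₁ p₂ =>
      p₂ * ((p₁ - p₂) / (x₁ ^ lam - x₂ ^ lam) - p₂ * x₂ ^ (-lam)) / θt - C₂
    let p₁s : ℝ := 2 * θt * x₁ ^ lam * (x₁ ^ lam - x₂ ^ lam) / (4 * x₁ ^ lam - x₂ ^ lam)
    let p₂s : ℝ := θt * x₂ ^ lam * (x₁ ^ lam - x₂ ^ lam) / (4 * x₁ ^ lam - x₂ ^ lam)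
    (deriv (fun p₁ => Prof₁ p₁ p₂s) p₁s = 0 ∧ deriv (fun p₂ => Prof₂ p₁s p₂) p₂s = 0) ∧
    (∀ q₁ q₂ : ℝ,
      deriv (fun p₁ => Prof₁ p₁ q₂) q₁ = 0 → deriv (fun p₂ => Prof₂ q₁ p₂) q₂ = 0 →
      q₁ = p₁s ∧ q₂ = p₂s) := by
  intro Prof₁ Prof₂ p₁s p₂s
  have hb : 0 < x₂ ^ lam := Real.rpow_pos_of_pos hx₂ lam
  have hba : x₂ ^ lam < x₁ ^ lam := Real.rpow_lt_rpow hx₂.le hx hlam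
  have foc_iff : ∀ q₁ q₂ : ℝ,
      (deriv (fun p₁ => Prof₁ p₁ q₂) q₁ = 0 ∧ deriv (fun p₂ => Prof₂ q₁ p₂) q₂ = 0) ↔
        q₁ = p₁s ∧ q₂ = p₂s := by
    intro q₁ q₂
    rw [(hasDerivAt_highProfit _ _ _ _ q₁).deriv, (hasDerivAt_lowProfit _ _ _ _ _ q₂).deriv,
      Real.rpow_neg hx₂.le, highFOC_iff hθ.ne' (sub_ne_zero.2 hba.ne'),
      lowFOC_iff hθ.ne' hb.ne' (sub_ne_zero.2 hba.ne')]
    exact linearSystem_iff (by linarith)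
  exact ⟨(foc_iff p₁s p₂s).2 ⟨rfl, rfl⟩, fun q₁ q₂ h₁ h₂ => (foc_iff q₁ q₂).1 ⟨h₁, h₂⟩⟩

/-- In the duopoly pricing subgame, the prices
p₁* = 2θ̃x₁^λ(x₁^λ−x₂^λ)/(4x₁^λ−x₂^λ), p₂* = θ̃x₂^λ(x₁^λ−x₂^λ)/(4x₁^λ−x₂^λ)
are the unique simultaneous solution of the first-order conditions. -/
theorem stmt_14 (θt x₁ x₂ lam C₁ C₂ : ℝ) (hθ : 0 < θt) (hlam : 0 < lam)
    (hx₂ : 0 < x₂) (hx : x₂ < x₁) (hx₁ : x₁ ≤ 1) :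
    let Prof₁ : ℝ → ℝ → ℝ := fun p₁ p₂ =>
      p₁ * (θt - (p₁ - p₂) / (x₁ ^ lam - x₂ ^ lam)) / θt - C₁
    let Prof₂ : ℝ → ℝ → ℝ := fun p₁ p₂ =>
      p₂ * ((p₁ - p₂) / (x₁ ^ lam - x₂ ^ lam) - p₂ * x₂ ^ (-lam)) / θt - C₂
    let p₁s : ℝ := 2 * θt * x₁ ^ lam * (x₁ ^ lam - x₂ ^ lam) / (4 * x₁ ^ lam - x₂ ^ lam)
    let p₂s : ℝ := θt * x₂ ^ lam * (x₁ ^ lam - x₂ ^ lam) / (4 * x₁ ^ lam - x₂ ^ lam)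
    (deriv (fun p₁ => Prof₁ p₁ p₂s) p₁s = 0 ∧ deriv (fun p₂ => Prof₂ p₁s p₂) p₂s = 0) ∧
    (∀ q₁ q₂ : ℝ,
      deriv (fun p₁ => Prof₁ p₁ q₂) q₁ = 0 → deriv (fun p₂ => Prof₂ q₁ p₂) q₂ = 0 →
      q₁ = p₁s ∧ q₂ = p₂s) :=
  stmt_14_general θt x₁ x₂ lam C₁ C₂ hθ hlam hx₂ hx
end
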